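/- Reflection formula for Γ_q via theta: for |q|<1 and z on the unit circle (z ≠ q^{-m} and z ≠ q^{m+1} poles avoided), Γ_q(z) · Γ_q(q z^{-1}) = 1/((z;q)_∞ (q z^{-1};q)_∞), and the right-hand side equals 1/((q;q)_∞^{-1}·θ) where (z;q)_∞(qz^{-1};q)_∞(q;q)_∞ = ∑_{n∈ℤ}(-1)ⁿ q^{n(n-1)/2} zⁿ (Jacobi triple product form). In particular (z;q)_∞ · (qz^{-1};q)_∞ · (q;q)_∞ = ∑_{n∈ℤ}(-1)ⁿ q^{binom(n,2)} zⁿ. -/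

import Mathlib

/-!
Cauchy's finite form of the triple product: the finite `q`-binomial theorem
`(a;q)_n = ∑_k (-1)^k q^(k choose 2) [n, k]_q a^k`, taken at `a = z q^(-N)` and `n = 2N`, splits
`(z q^(-N);q)_(2N)` as `(-z)^N q^(-(N+1 choose 2)) (q/z;q)_N (z;q)_N` and yields
`(z;q)_N (q/z;q)_N = ∑_{|n| ≤ N} (-1)^n q^(n(n-1)/2) z^n [2N, N+n]_q`.
As `N → ∞` each Gaussian binomial `[2N, N+n]_q = (q;q)_(2N) / ((q;q)_(N+n) (q;q)_(N-n))` tends to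
`1/(q;q)_∞`, and all of them are bounded by `1/(|q|;|q|)_∞`, so Tannery's theorem passes to the
limit. The case `q = 0` is a direct computation.
-/

open Finset Filter Topology

namespace QSeries

variable {R : Type*}

section CommRing

variable [CommRing R]

def qPochhammer (a q : R) (n : ℕ) : R := ∏ i ∈ range n, (1 - a * q ^ i)

def gaussBinom (q : R) : ℕ → ℕ → R
  | _, 0 => 1
  | 0, _ + 1 => 0
  | n + 1, k + 1 => gaussBinom q n k + q ^ (k + 1) * gaussBinom q n (k + 1)

variable (a q : R)

@[simp] lemma qPochhammer_zero : qPochhammer a q 0 = 1 := prod_range_zero _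

lemma qPochhammer_succ (n : ℕ) :
    qPochhammer a q (n + 1) = qPochhammer a q n * (1 - a * q ^ n) :=
  prod_range_succ _ n

lemma qPochhammer_succ' (n : ℕ) :
    qPochhammer a q (n + 1) = (1 - a) * qPochhammer (a * q) q n := by
  simp only [qPochhammer, prod_range_succ', pow_zero, mul_one, pow_succ, mul_assoc, mul_comm]

lemma qPochhammer_add (m n : ℕ) :
    qPochhammer a q (m + n) = qPochhammer a q m * qPochhammer (a * q ^ m) q n := by
  simp only [qPochhammer, prod_range_add, pow_add, mul_assoc]

@[simp] lemma gaussBinom_zero_right (n : ℕ) : gaussBinom q n 0 = 1 := by cases n <;> rfl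

lemma gaussBinom_succ_succ (n k : ℕ) :
    gaussBinom q (n + 1) (k + 1) = gaussBinom q n k + q ^ (k + 1) * gaussBinom q n (k + 1) :=
  rfl

lemma gaussBinom_eq_zero_of_lt {n k : ℕ} (h : n < k) : gaussBinom q n k = 0 := by
  induction n generalizing k with
  | zero => obtain ⟨k, rfl⟩ := Nat.exists_eq_add_one.mpr h; rfl
  | succ n ih =>
    obtain ⟨k, rfl⟩ := Nat.exists_eq_add_one.mpr (Nat.zero_lt_of_lt h)
    rw [gaussBinom_succ_succ, ih (by omega), ih (by omega), mul_zero, add_zero]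

lemma gaussBinom_mul_qPochhammer_mul_qPochhammer {n k : ℕ} (h : k ≤ n) :
    gaussBinom q n k * qPochhammer q q k * qPochhammer q q (n - k) = qPochhammer q q n := by
  induction n generalizing k with
  | zero =>
    obtain rfl : k = 0 := by omega
    simp
  | succ n ih =>
    rcases k with _ | k
    · simp
    obtain ⟨m, rfl⟩ := Nat.exists_eq_add_of_le (Nat.le_of_succ_le_succ h)
    have h1 := ih (k := k) (by omega)
    rw [Nat.add_sub_cancel_left] at h1
    rw [show k + m + 1 - (k + 1) = m by omega, gaussBinom_succ_succ, qPochhammer_succ,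
      qPochhammer_succ]
    rcases m with _ | m
    · rw [gaussBinom_eq_zero_of_lt q (by omega : k + 0 < k + 1)]
      simp only [add_zero] at h1 ⊢
      linear_combination (1 - q * q ^ k) * h1
    · have h2 := ih (k := k + 1) (by omega)
      rw [show k + (m + 1) - (k + 1) = m by omega] at h2
      simp only [← add_assoc] at h1 h2
      rw [qPochhammer_succ q q m] at h1 ⊢
      rw [qPochhammer_succ q q k] at h2
      linear_combination (1 - q * q ^ k) * h1 + q ^ (k + 1) * (1 - q * q ^ m) * h2

theorem qPochhammer_eq_sum_gaussBinom (n : ℕ) :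
    qPochhammer a q n =
      ∑ k ∈ range (n + 1), (-1) ^ k * q ^ k.choose 2 * gaussBinom q n k * a ^ k := by
  induction n generalizing a with
  | zero => simp
  | succ n ih =>
    have hshift : ∑ k ∈ range (n + 1),
          (-1) ^ (k + 1) * q ^ (k + 1).choose 2 * (q ^ (k + 1) * gaussBinom q n (k + 1)) *
            a ^ (k + 1)
        = ∑ k ∈ range (n + 1), (-1) ^ k * q ^ k.choose 2 * gaussBinom q n k * (a * q) ^ k - 1 := by
      rw [sum_range_succ, sum_range_succ' _ n, gaussBinom_eq_zero_of_lt q (Nat.lt_succ_self n)]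
      simp only [Nat.choose_succ_succ', Nat.choose_one_right, pow_add, mul_pow]
      simp only [pow_one, mul_neg, mul_one, neg_mul, sum_neg_distrib, mul_zero, zero_mul, add_zero,
        pow_zero, Nat.choose_zero_succ, gaussBinom_zero_right, add_sub_cancel_right, neg_inj]
      exact sum_congr rfl fun _ _ => by ring
    rw [qPochhammer_succ', ih, sum_range_succ' _ (n + 1)]
    simp only [gaussBinom_succ_succ, mul_add, add_mul, sum_add_distrib, hshift]
    simp only [pow_zero, Nat.choose_zero_succ, gaussBinom_zero_right, mul_one]
    rw [add_assoc, sub_add_cancel, mul_sum, ← sum_add_distrib]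
    refine sum_congr rfl fun k _ => ?_
    rw [Nat.choose_succ_succ', Nat.choose_one_right, pow_add]
    ring

end CommRing

section Field

variable {K : Type*} [Field K]

def thetaTerm (q z : K) (n : ℤ) : K := (-1) ^ n * q ^ (n * (n - 1) / 2) * z ^ n

lemma two_mul_triangle (n : ℤ) : 2 * (n * (n - 1) / 2) = n * (n - 1) :=
  Int.two_mul_ediv_two_of_even (Int.even_mul_pred_self n)

lemma natCast_choose_two (k : ℕ) : ((k.choose 2 : ℕ) : ℤ) = k * (k - 1) / 2 := by
  rcases k with _ | k
  · rfl
  · rw [Nat.choose_two_right, Int.natCast_ediv]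
    push_cast
    ring_nf

lemma thetaTerm_add_one {q z : K} (hq : q ≠ 0) (hz : z ≠ 0) (n : ℤ) :
    thetaTerm q z (n + 1) = -z * q ^ n * thetaTerm q z n := by
  have hexp : (n + 1) * (n + 1 - 1) / 2 = n * (n - 1) / 2 + n := by
    have := two_mul_triangle (n + 1)
    have := two_mul_triangle n
    linarith
  rw [thetaTerm, thetaTerm, hexp, zpow_add₀ hq, zpow_add_one₀ hz,
    zpow_add_one₀ (neg_ne_zero.mpr one_ne_zero)]
  ring

lemma thetaTerm_neg {q z : K} (hq : q ≠ 0) (n : ℤ) :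
    thetaTerm q z (-n) = thetaTerm q (q * z⁻¹) n := by
  have hexp : -n * (-n - 1) / 2 = n * (n - 1) / 2 + n := by
    have := two_mul_triangle (-n)
    have := two_mul_triangle n
    linarith
  rw [thetaTerm, thetaTerm, hexp, zpow_add₀ hq, zpow_neg, zpow_neg, ← inv_zpow, inv_neg, inv_one,
    mul_zpow, inv_zpow]
  ring

lemma neg_one_pow_mul_pow_choose_two_mul_inv_pow {q : K} (hq : q ≠ 0) {z : K} (hz : z ≠ 0)
    (k N : ℕ) :
    (-1) ^ k * q ^ k.choose 2 * (z * q⁻¹ ^ N) ^ k * q ^ (N + 1).choose 2 =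
      (-z) ^ N * thetaTerm q z (k - N) := by
  have hexp : ((k.choose 2 : ℕ) : ℤ) - (N * k : ℕ) + ((N + 1).choose 2 : ℕ) =
      ((k : ℤ) - N) * ((k : ℤ) - N - 1) / 2 := by
    have := two_mul_triangle ((k : ℤ) - N)
    push_cast [natCast_choose_two]
    have := two_mul_triangle (k : ℤ)
    have := two_mul_triangle ((N : ℤ) + 1)
    linarith
  rw [thetaTerm, ← hexp, zpow_add₀ hq, zpow_sub₀ hq, zpow_sub₀ (neg_ne_zero.mpr one_ne_zero),
    zpow_sub₀ hz]
  simp only [zpow_natCast, mul_pow, inv_pow, ← pow_mul, neg_pow z N]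
  field_simp

lemma qPochhammer_mul_inv_pow {q : K} (hq : q ≠ 0) {a : K} (ha : a ≠ 0) (N : ℕ) :
    qPochhammer (a * q⁻¹ ^ N) q N * q ^ (N + 1).choose 2 =
      (-a) ^ N * qPochhammer (q * a⁻¹) q N := by
  induction N with
  | zero => simp
  | succ N ih =>
    calc qPochhammer (a * q⁻¹ ^ (N + 1)) q (N + 1) * q ^ (N + 1 + 1).choose 2
        = (1 - a * q⁻¹ ^ (N + 1)) * q ^ (N + 1) *
            (qPochhammer (a * q⁻¹ ^ N) q N * q ^ (N + 1).choose 2) := by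
          rw [qPochhammer_succ',
            show a * q⁻¹ ^ (N + 1) * q = a * q⁻¹ ^ N by simp [pow_succ, mul_assoc, hq],
            Nat.choose_succ_succ' (N + 1) 1, Nat.choose_one_right, pow_add]
          ring
      _ = (-a) ^ (N + 1) * qPochhammer (q * a⁻¹) q (N + 1) := by
          have hcancel : (1 - a * q⁻¹ ^ (N + 1)) * q ^ (N + 1) = q ^ (N + 1) - a := by
            rw [sub_mul, inv_pow, mul_assoc, inv_mul_cancel₀ (pow_ne_zero _ hq)]
            ring
          rw [hcancel, ih, qPochhammer_succ]
          field_simp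
          ring

theorem qPochhammer_mul_qPochhammer_eq_sum {q z : K} (hq : q ≠ 0) (hz : z ≠ 0) (N : ℕ) :
    qPochhammer z q N * qPochhammer (q * z⁻¹) q N =
      ∑ n ∈ Icc (-N : ℤ) N, thetaTerm q z n * gaussBinom q (2 * N) (n + N).toNat := by
  refine mul_left_cancel₀ (pow_ne_zero N (neg_ne_zero.mpr hz)) ?_
  calc (-z) ^ N * (qPochhammer z q N * qPochhammer (q * z⁻¹) q N)
      = qPochhammer (z * q⁻¹ ^ N) q (N + N) * q ^ (N + 1).choose 2 := by
        rw [qPochhammer_add, show z * q⁻¹ ^ N * q ^ N = z by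
          rw [mul_assoc, inv_pow, inv_mul_cancel₀ (pow_ne_zero N hq), mul_one], mul_right_comm,
          qPochhammer_mul_inv_pow hq hz]
        ring
    _ = ∑ k ∈ range (2 * N + 1), (-z) ^ N * (thetaTerm q z (k - N) * gaussBinom q (2 * N) k) := by
        rw [← two_mul, qPochhammer_eq_sum_gaussBinom, sum_mul]
        refine sum_congr rfl fun k _ => ?_
        linear_combination gaussBinom q (2 * N) k *
          neg_one_pow_mul_pow_choose_two_mul_inv_pow hq hz k N
    _ = (-z) ^ N * ∑ n ∈ Icc (-N : ℤ) N, thetaTerm q z n * gaussBinom q (2 * N) (n + N).toNat := by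
        rw [← mul_sum]
        congr 1
        refine sum_nbij' (fun k => k - N) (fun n => (n + N).toNat) ?_ ?_ ?_ ?_ ?_ <;>
          intro k hk <;> simp only [mem_range, mem_Icc] at hk ⊢
        all_goals first | omega | simp only [sub_add_cancel, Int.toNat_natCast]

end Field

section Normed

variable [NormedCommRing R] [NormOneClass R] {q : R}

lemma summable_norm_mul_pow (hq : ‖q‖ < 1) (a : R) : Summable fun j : ℕ => ‖a * q ^ j‖ :=
  ((summable_geometric_of_lt_one (norm_nonneg q) hq).mul_left ‖a‖).of_nonneg_of_le
    (fun _ => norm_nonneg _) fun j => (norm_mul_le _ _).trans (by gcongr; exact norm_pow_le _ _)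

lemma one_sub_mul_pow_self_ne_zero (hq : ‖q‖ < 1) (j : ℕ) : 1 - q * q ^ j ≠ 0 := by
  rw [← pow_succ', sub_ne_zero]
  intro h
  have := (norm_pow_le q (j + 1)).trans_lt (pow_lt_one₀ (norm_nonneg q) hq j.succ_ne_zero)
  rw [← h, norm_one] at this
  exact lt_irrefl _ this

variable [CompleteSpace R]

lemma tendsto_qPochhammer (hq : ‖q‖ < 1) (a : R) :
    Tendsto (qPochhammer a q) atTop (𝓝 (∏' j, (1 - a * q ^ j))) := by
  have := multipliable_one_add_of_summable (f := fun j => -(a * q ^ j))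
    (by simpa only [norm_neg] using summable_norm_mul_pow hq a)
  simp only [← sub_eq_add_neg] at this
  exact this.hasProd.tendsto_prod_nat

lemma tprod_one_sub_mul_pow_ne_zero [NormMulClass R] (hq : ‖q‖ < 1) {a : R}
    (ha : ∀ j, 1 - a * q ^ j ≠ 0) : ∏' j, (1 - a * q ^ j) ≠ 0 := by
  have := tprod_one_add_ne_zero_of_summable (f := fun j => -(a * q ^ j))
    (by simpa only [← sub_eq_add_neg] using ha)
    (by simpa only [norm_neg] using summable_norm_mul_pow hq a)
  simpa only [← sub_eq_add_neg] using this

end Normed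

section Real

variable {r : ℝ}

lemma one_sub_mul_pow_self_pos (h0 : 0 ≤ r) (h1 : r < 1) (j : ℕ) : 0 < 1 - r * r ^ j := by
  rw [← pow_succ', sub_pos]
  exact pow_lt_one₀ h0 h1 j.succ_ne_zero

lemma qPochhammer_self_pos (h0 : 0 ≤ r) (h1 : r < 1) (k : ℕ) : 0 < qPochhammer r r k :=
  prod_pos fun j _ => one_sub_mul_pow_self_pos h0 h1 j

lemma tprod_le_qPochhammer (h0 : 0 ≤ r) (h1 : r < 1) (k : ℕ) :
    ∏' j, (1 - r * r ^ j) ≤ qPochhammer r r k := by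
  refine Antitone.le_of_tendsto (antitone_nat_of_succ_le fun n => ?_)
    (tendsto_qPochhammer (by rwa [Real.norm_of_nonneg h0]) r) k
  rw [qPochhammer_succ]
  refine mul_le_of_le_one_right (qPochhammer_self_pos h0 h1 n).le ?_
  linarith [mul_nonneg h0 (pow_nonneg h0 n)]

lemma tprod_one_sub_mul_pow_self_pos (h0 : 0 ≤ r) (h1 : r < 1) : 0 < ∏' j, (1 - r * r ^ j) :=
  (tprod_nonneg fun j => (one_sub_mul_pow_self_pos h0 h1 j).le).lt_of_ne
    (tprod_one_sub_mul_pow_ne_zero (by rwa [Real.norm_of_nonneg h0])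
      fun j => (one_sub_mul_pow_self_pos h0 h1 j).ne').symm

end Real

lemma norm_gaussBinom_le [NormedCommRing R] [NormOneClass R] {q : R} (hq : ‖q‖ < 1) (n k : ℕ) :
    ‖gaussBinom q n k‖ ≤ (qPochhammer ‖q‖ ‖q‖ k)⁻¹ := by
  have hpos := qPochhammer_self_pos (norm_nonneg q) hq
  induction n generalizing k with
  | zero =>
    rcases k with _ | k
    · simp
    · simp [gaussBinom, (hpos (k + 1)).le]
  | succ n ih =>
    rcases k with _ | k
    · simp
    calc ‖gaussBinom q (n + 1) (k + 1)‖
        ≤ ‖gaussBinom q n k‖ + ‖q‖ ^ (k + 1) * ‖gaussBinom q n (k + 1)‖ := by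
          rw [gaussBinom_succ_succ]
          exact norm_add_le_of_le le_rfl
            ((norm_mul_le _ _).trans (by gcongr; exact norm_pow_le _ _))
      _ ≤ (qPochhammer ‖q‖ ‖q‖ k)⁻¹ + ‖q‖ ^ (k + 1) * (qPochhammer ‖q‖ ‖q‖ (k + 1))⁻¹ := by
          gcongr
          exacts [ih k, ih (k + 1)]
      _ = (qPochhammer ‖q‖ ‖q‖ (k + 1))⁻¹ := by
          have := hpos k
          have := one_sub_mul_pow_self_pos (norm_nonneg q) hq k
          rw [qPochhammer_succ]
          field_simp
          ring


lemma tendsto_toNat_add_atTop (n : ℤ) : Tendsto (fun N : ℕ => (n + N).toNat) atTop atTop :=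
  tendsto_atTop_atTop.mpr fun b => ⟨b + n.natAbs, fun N hN => by omega⟩

section NormedField

variable {K : Type*} [NormedField K] {q z : K}

lemma qPochhammer_self_ne_zero (hq : ‖q‖ < 1) (n : ℕ) : qPochhammer q q n ≠ 0 :=
  prod_ne_zero_iff.mpr fun j _ => one_sub_mul_pow_self_ne_zero hq j

lemma summable_norm_thetaTerm_natCast (hq : ‖q‖ < 1) (hq0 : q ≠ 0) (hz : z ≠ 0) :
    Summable fun n : ℕ => ‖thetaTerm q z n‖ := by
  refine summable_of_ratio_norm_eventually_le (r := 1 / 2) (by norm_num) ?_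
  have hlim : Tendsto (fun n : ℕ => ‖z‖ * ‖q‖ ^ n) atTop (𝓝 0) := by
    simpa using (tendsto_pow_atTop_nhds_zero_of_lt_one (norm_nonneg q) hq).const_mul ‖z‖
  filter_upwards [hlim.eventually_le_const (by norm_num : (0 : ℝ) < 1 / 2)] with n hn
  rw [norm_norm, norm_norm, Nat.cast_succ, thetaTerm_add_one hq0 hz, norm_mul, norm_mul, norm_neg,
    norm_zpow, zpow_natCast]
  exact mul_le_mul_of_nonneg_right hn (norm_nonneg _)

lemma summable_norm_thetaTerm (hq : ‖q‖ < 1) (hq0 : q ≠ 0) (hz : z ≠ 0) :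
    Summable fun n : ℤ => ‖thetaTerm q z n‖ := by
  refine .of_nat_of_neg (summable_norm_thetaTerm_natCast hq hq0 hz) ?_
  simpa only [thetaTerm_neg hq0] using
    summable_norm_thetaTerm_natCast hq hq0 (mul_ne_zero hq0 (inv_ne_zero hz))

lemma tsum_thetaTerm_zero_left (z : K) : ∑' n, thetaTerm 0 z n = 1 - z := by
  rw [tsum_eq_sum (s := {0, 1}) fun n hn => ?_]
  · simp [thetaTerm, sub_eq_add_neg]
  have hexp : n * (n - 1) / 2 ≠ 0 := by
    intro h
    have := two_mul_triangle n
    rw [h, mul_zero, eq_comm, mul_eq_zero, sub_eq_zero] at this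
    simp_all
  rw [thetaTerm, zero_zpow _ hexp, mul_zero, zero_mul]

lemma tprod_one_sub_mul_zero_pow (a : K) : ∏' j : ℕ, (1 - a * 0 ^ j) = 1 - a := by
  rw [tprod_eq_prod (s := {0}) fun j hj => by simp [zero_pow (by simpa using hj)]]
  simp

variable [CompleteSpace K]

lemma tendsto_gaussBinom {α : Type*} {l : Filter α} (hq : ‖q‖ < 1) {a b : α → ℕ}
    (ha : Tendsto a l atTop) (hb : Tendsto b l atTop) :
    Tendsto (fun x => gaussBinom q (a x + b x) (a x)) l (𝓝 (∏' j, (1 - q * q ^ j))⁻¹) := by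
  have hP := tprod_one_sub_mul_pow_ne_zero hq (one_sub_mul_pow_self_ne_zero hq)
  have hT := tendsto_qPochhammer hq q
  have hquot := (hT.comp (ha.atTop_add_atTop hb)).div ((hT.comp ha).mul (hT.comp hb))
    (mul_ne_zero hP hP)
  rw [div_mul_cancel_left₀ hP] at hquot
  refine hquot.congr fun x => ?_
  have hprod := gaussBinom_mul_qPochhammer_mul_qPochhammer q (Nat.le_add_right (a x) (b x))
  rw [Nat.add_sub_cancel_left] at hprod
  rw [Pi.div_apply, Function.comp_apply, Function.comp_apply, Function.comp_apply,
    div_eq_iff (mul_ne_zero (qPochhammer_self_ne_zero hq _) (qPochhammer_self_ne_zero hq _)),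
    ← mul_assoc, hprod]

theorem tprod_mul_tprod_eq_tsum_thetaTerm_mul_inv (hq : ‖q‖ < 1) (hq0 : q ≠ 0) (hz : z ≠ 0) :
    (∏' j, (1 - z * q ^ j)) * (∏' j, (1 - q * z⁻¹ * q ^ j)) =
      (∑' n, thetaTerm q z n) * (∏' j, (1 - q * q ^ j))⁻¹ := by
  set C := (∏' j, (1 - ‖q‖ * ‖q‖ ^ j))⁻¹
  have hG (n k : ℕ) : ‖gaussBinom q n k‖ ≤ C :=
    (norm_gaussBinom_le hq n k).trans <| inv_anti₀
      (tprod_one_sub_mul_pow_self_pos (norm_nonneg q) hq) (tprod_le_qPochhammer (norm_nonneg q) hq k)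
  let F (N : ℕ) (n : ℤ) : K :=
    if n ∈ Icc (-N : ℤ) N then thetaTerm q z n * gaussBinom q (2 * N) (n + N).toNat else 0
  have hF (N : ℕ) : ∑' n, F N n = qPochhammer z q N * qPochhammer (q * z⁻¹) q N := by
    rw [qPochhammer_mul_qPochhammer_eq_sum hq0 hz, tsum_eq_sum fun n hn => if_neg hn]
    exact sum_congr rfl fun n hn => if_pos hn
  have hpointwise (n : ℤ) :
      Tendsto (fun N => F N n) atTop (𝓝 (thetaTerm q z n * (∏' j, (1 - q * q ^ j))⁻¹)) := by
    refine ((tendsto_gaussBinom hq (tendsto_toNat_add_atTop n)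
      (tendsto_toNat_add_atTop (-n))).const_mul _).congr' ?_
    filter_upwards [eventually_ge_atTop n.natAbs] with N hN
    simp only [F]
    rw [if_pos (mem_Icc.mpr ⟨by omega, by omega⟩),
      show 2 * N = (n + N).toNat + (-n + N).toNat by omega]
  have hbound (N : ℕ) (n : ℤ) : ‖F N n‖ ≤ ‖thetaTerm q z n‖ * C := by
    by_cases hn : n ∈ Icc (-N : ℤ) N
    · simp only [F, if_pos hn, norm_mul]
      exact mul_le_mul_of_nonneg_left (hG _ _) (norm_nonneg _)
    · simp only [F, if_neg hn, norm_zero]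
      exact mul_nonneg (norm_nonneg _)
        (inv_nonneg.mpr (tprod_one_sub_mul_pow_self_pos (norm_nonneg q) hq).le)
  have hlim := tendsto_tsum_of_dominated_convergence
    ((summable_norm_thetaTerm hq hq0 hz).mul_right C) hpointwise (.of_forall hbound)
  simp only [hF, tsum_mul_right] at hlim
  exact tendsto_nhds_unique ((tendsto_qPochhammer hq z).mul (tendsto_qPochhammer hq _)) hlim

theorem jacobi_triple_product (hq : ‖q‖ < 1) (hz : z ≠ 0) :
    (∏' j, (1 - z * q ^ j)) * (∏' j, (1 - q * z⁻¹ * q ^ j)) * (∏' j, (1 - q ^ (j + 1))) =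
      ∑' n, thetaTerm q z n := by
  rcases eq_or_ne q 0 with rfl | hq0
  · simp [tprod_one_sub_mul_zero_pow, tsum_thetaTerm_zero_left]
  simp_rw [pow_succ']
  rw [tprod_mul_tprod_eq_tsum_thetaTerm_mul_inv hq hq0 hz,
    inv_mul_cancel_right₀ (tprod_one_sub_mul_pow_ne_zero hq (one_sub_mul_pow_self_ne_zero hq))]

end NormedField

end QSeries

/-- Reflection formula for `Γ_q` via the Jacobi triple product: for `|q| < 1` and `z ≠ 0`,
`Γ_q(z) · Γ_q(q z⁻¹) = ((z;q)_∞ (qz⁻¹;q)_∞)⁻¹` and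
`(z;q)_∞ · (qz⁻¹;q)_∞ · (q;q)_∞ = ∑_{n∈ℤ} (-1)ⁿ q^{n(n-1)/2} zⁿ`. -/
theorem q_gamma_reflection_triple_product (q z : ℂ) (hq : ‖q‖ < 1) (hz : z ≠ 0) :
    ((∏' j : ℕ, (1 - z * q ^ j))⁻¹ * (∏' j : ℕ, (1 - q * z⁻¹ * q ^ j))⁻¹
        = ((∏' j : ℕ, (1 - z * q ^ j)) * (∏' j : ℕ, (1 - q * z⁻¹ * q ^ j)))⁻¹) ∧
    ((∏' j : ℕ, (1 - z * q ^ j)) * (∏' j : ℕ, (1 - q * z⁻¹ * q ^ j)) *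
          (∏' j : ℕ, (1 - q ^ (j + 1)))
        = ∑' n : ℤ, (-1) ^ n * q ^ (n * (n - 1) / 2) * z ^ n) :=
  ⟨(mul_inv _ _).symm, QSeries.jacobi_triple_product hq hz⟩
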